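/- Let X_1,...,X_n be sampled without replacement from a finite population of N reals with mean μ, variance σ², and range [a,b], and let V_n = (1/n)∑_{i=1}^n (X_i − μ)². Then for all ε > 0, P(σ² − V_n ≥ ((b−a)²/n) ε) ≤ exp(−(b−a)²ε²/(2nσ²)); equivalently, with probability at least 1 − δ, σ² − 2σ(b−a)√(log(1/δ)/(2n)) ≤ V_n. -/

import Mathlib

/-! Chernoff's method. For `l ≥ 0`, the exponential moment of `l (n σ² - ∑_{i<n} (X_i - μ)²)` is an
average over permutations `e` of products `∏_{i<n} g (x (e i))` with `g = exp (-l (· - μ)²) ≥ 0`.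
Hoeffding's reduction bounds this average by `(mean g)ⁿ`, its value for sampling with replacement:
trading a factor `g (e p)`, `p` outside the block, for `g (e k)` cannot decrease the sum, because
precomposing with `swap p k` and AM-GM turn the difference into a sum of squares. For one draw,
`exp (-y) ≤ 1 - y + y²/2` and `(x_j - μ)² ≤ (b - a)²` give Maurer's self-bounding estimate
`mean g ≤ exp ((l² (b - a)² / 2 - l) σ²)`, and `l = t / ((b - a)² σ²)` yields the sub-Gaussian
lower tail `exp (-n t² / (2 (b - a)² σ²))`, which is inverted at `exp (-L) = δ`. -/

open MeasureTheory Finset Real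
open scoped ENNReal

/-- The first `N` coordinates of the process `X` are a sample drawn without replacement
from the population `x : Fin N → ℝ`, i.e. the law of `(X 0, …, X (N-1))` is the uniform
distribution over the orderings of the population. -/
def samplesWithoutReplacement {Ω : Type*} [MeasurableSpace Ω] (P : Measure Ω)
    (N : ℕ) (x : Fin N → ℝ) (X : ℕ → Ω → ℝ) : Prop :=
  Measure.map (fun ω (i : Fin N) => X i ω) P =
    (Nat.factorial N : ℝ≥0∞)⁻¹ • ∑ e : Equiv.Perm (Fin N), Measure.dirac (fun i => x (e i))

open Equiv Fintype
open scoped Nat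

section PermutationProducts

variable {α : Type*} [Fintype α] [DecidableEq α] {g : α → ℝ}

theorem sum_perm_prod_mul_le (hg : 0 ≤ g) {S : Finset α} {p : α} (hp : p ∉ S) (k : α) :
    ∑ e : Perm α, (∏ i ∈ S, g (e i)) * g (e p) ≤ ∑ e : Perm α, (∏ i ∈ S, g (e i)) * g (e k) := by
  have hswap : ∀ e : Perm α, (e * swap p k) k = e p := fun e => by simp
  by_cases hk : k ∈ S
  · set R : Perm α → ℝ := fun e => ∏ i ∈ S.erase k, g (e i)
    have hR : ∀ e, R (e * swap p k) = R e := fun e => prod_congr rfl fun i hi => by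
      rw [Perm.mul_apply, swap_apply_of_ne_of_ne (ne_of_mem_of_not_mem (mem_of_mem_erase hi) hp)
        (ne_of_mem_erase hi)]
    have hsymm : ∑ e : Perm α, R e * g (e k) ^ 2 = ∑ e : Perm α, R e * g (e p) ^ 2 := by
      rw [← Equiv.sum_comp (Equiv.mulRight (swap p k))]
      simp only [coe_mulRight, hR, hswap]
    have hsplit : ∀ e : Perm α, ∏ i ∈ S, g (e i) = g (e k) * R e := fun e =>
      (mul_prod_erase S (fun i => g (e i)) hk).symm
    calc ∑ e : Perm α, (∏ i ∈ S, g (e i)) * g (e p)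
        = ∑ e : Perm α, R e * (g (e k) * g (e p)) :=
          sum_congr rfl fun e _ => by rw [hsplit]; ring
      _ ≤ ∑ e : Perm α, R e * ((g (e k) ^ 2 + g (e p) ^ 2) / 2) := by
          gcongr with e
          · exact prod_nonneg fun i _ => hg _
          · nlinarith [sq_nonneg (g (e k) - g (e p))]
      _ = (∑ e : Perm α, R e * g (e k) ^ 2 + ∑ e : Perm α, R e * g (e p) ^ 2) / 2 := by
          rw [← sum_add_distrib, sum_div]
          exact sum_congr rfl fun e _ => by ring
      _ = ∑ e : Perm α, (∏ i ∈ S, g (e i)) * g (e k) := by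
          rw [← hsymm, add_self_div_two]
          exact sum_congr rfl fun e _ => by rw [hsplit]; ring
  · refine le_of_eq ?_
    rw [← Equiv.sum_comp (Equiv.mulRight (swap p k)) fun e => (∏ i ∈ S, g (e i)) * g (e k)]
    refine sum_congr rfl fun e _ => ?_
    simp only [coe_mulRight, hswap]
    congr 1
    refine prod_congr rfl fun i hi => ?_
    rw [Perm.mul_apply, swap_apply_of_ne_of_ne (ne_of_mem_of_not_mem hi hp)
      (ne_of_mem_of_not_mem hi hk)]

theorem card_mul_sum_perm_prod_insert_le (hg : 0 ≤ g) {S : Finset α} {p : α} (hp : p ∉ S) :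
    card α * ∑ e : Perm α, ∏ i ∈ insert p S, g (e i) ≤
      (∑ j, g j) * ∑ e : Perm α, ∏ i ∈ S, g (e i) :=
  calc card α * ∑ e : Perm α, ∏ i ∈ insert p S, g (e i)
      = ∑ _k : α, ∑ e : Perm α, (∏ i ∈ S, g (e i)) * g (e p) := by
        simp [prod_insert hp, mul_comm]
    _ ≤ ∑ k : α, ∑ e : Perm α, (∏ i ∈ S, g (e i)) * g (e k) :=
        sum_le_sum fun k _ => sum_perm_prod_mul_le hg hp k
    _ = (∑ j, g j) * ∑ e : Perm α, ∏ i ∈ S, g (e i) := by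
        rw [sum_comm, mul_sum]
        refine sum_congr rfl fun e _ => ?_
        rw [← mul_sum, Equiv.sum_comp e g, mul_comm]

theorem sum_perm_prod_div_le (hg : 0 ≤ g) (S : Finset α) :
    (∑ e : Perm α, ∏ i ∈ S, g (e i)) / (card α)! ≤ ((∑ j, g j) / card α) ^ #S := by
  induction S using Finset.induction_on with
  | empty => simp [Fintype.card_perm, (Nat.factorial_pos _).ne']
  | insert p S hp ih =>
    have hcard : (0 : ℝ) < card α := Nat.cast_pos.2 (card_pos_iff.2 ⟨p⟩)
    have hmean : 0 ≤ (∑ j, g j) / card α := div_nonneg (sum_nonneg fun j _ => hg j) hcard.le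
    calc (∑ e : Perm α, ∏ i ∈ insert p S, g (e i)) / (card α)!
        = card α * (∑ e : Perm α, ∏ i ∈ insert p S, g (e i)) / (card α * (card α)!) := by
          rw [mul_div_mul_left _ _ hcard.ne']
      _ ≤ (∑ j, g j) * (∑ e : Perm α, ∏ i ∈ S, g (e i)) / (card α * (card α)!) := by
          gcongr ?_ / _; exact card_mul_sum_perm_prod_insert_le hg hp
      _ = (∑ j, g j) / card α * ((∑ e : Perm α, ∏ i ∈ S, g (e i)) / (card α)!) := by
          rw [mul_div_mul_comm]
      _ ≤ ((∑ j, g j) / card α) ^ #(insert p S) := by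
          rw [card_insert_of_notMem hp, _root_.pow_succ']; gcongr

end PermutationProducts

theorem sum_div_card_mem_Icc {ι : Type*} [Fintype ι] [Nonempty ι] {f : ι → ℝ} {p q : ℝ}
    (h : ∀ j, f j ∈ Set.Icc p q) : (∑ j, f j) / card ι ∈ Set.Icc p q := by
  rw [← Fintype.expect_eq_sum_div_card]
  exact ⟨le_expect univ_nonempty fun j _ => (h j).1, expect_le univ_nonempty fun j _ => (h j).2⟩

theorem exp_neg_le_one_sub_add_sq_div_two {y : ℝ} (hy : 0 ≤ y) : exp (-y) ≤ 1 - y + y ^ 2 / 2 := by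
  let f : ℝ → ℝ := fun z => 1 - z + z ^ 2 / 2 - exp (-z)
  have hf : Monotone f := by
    refine monotone_of_hasDerivAt_nonneg (f' := fun z => -1 + z + exp (-z)) (fun z => ?_)
      fun z => show 0 ≤ -1 + z + exp (-z) by linarith [add_one_le_exp (-z)]
    have := (((hasDerivAt_id z).const_sub 1).add ((hasDerivAt_pow 2 z).div_const 2)).sub
      (hasDerivAt_neg z).exp
    exact this.congr_deriv (by norm_num)
  simpa [f] using hf hy

theorem sum_exp_neg_mul_div_le {ι : Type*} [Fintype ι] {z : ι → ℝ} {c l : ℝ}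
    (hz : ∀ j, z j ∈ Set.Icc 0 c) (hl : 0 ≤ l) :
    (∑ j, exp (-(l * z j))) / card ι ≤ exp ((l ^ 2 * c / 2 - l) * ((∑ j, z j) / card ι)) := by
  have hpoint : ∀ j, exp (-(l * z j)) ≤ 1 + (l ^ 2 * c / 2 - l) * z j := fun j => by
    have := exp_neg_le_one_sub_add_sq_div_two (mul_nonneg hl (hz j).1)
    nlinarith [mul_le_mul_of_nonneg_left (hz j).2 (mul_nonneg (sq_nonneg l) (hz j).1)]
  calc (∑ j, exp (-(l * z j))) / card ι ≤ (∑ j, (1 + (l ^ 2 * c / 2 - l) * z j)) / card ι := by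
        gcongr with j; exact hpoint j
    _ ≤ 1 + (l ^ 2 * c / 2 - l) * ((∑ j, z j) / card ι) := by
        rcases isEmpty_or_nonempty ι with hι | hι
        · simp
        · rw [sum_add_distrib, ← mul_sum, add_div, mul_div_assoc]
          simp
    _ ≤ exp ((l ^ 2 * c / 2 - l) * ((∑ j, z j) / card ι)) :=
        (add_one_le_exp _).trans_eq' (add_comm _ _)

section Sampling

variable {Ω : Type*} [MeasurableSpace Ω] {P : Measure Ω} {N : ℕ} {x : Fin N → ℝ}
  {X : ℕ → Ω → ℝ}

theorem samplesWithoutReplacement.lintegral_comp (hX : samplesWithoutReplacement P N x X)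
    (hXm : ∀ i, Measurable (X i)) {f : (Fin N → ℝ) → ℝ≥0∞} (hf : Measurable f) :
    ∫⁻ ω, f (fun i => X i ω) ∂P = (N ! : ℝ≥0∞)⁻¹ * ∑ e : Perm (Fin N), f (x ∘ e) := by
  rw [← lintegral_map hf (measurable_pi_lambda _ fun i => hXm i), hX, lintegral_smul_measure,
    lintegral_finsetSum_measure]
  simp only [lintegral_dirac, smul_eq_mul]
  rfl

theorem samplesWithoutReplacement.lintegral_prod_le (hX : samplesWithoutReplacement P N x X)
    (hXm : ∀ i, Measurable (X i)) {n : ℕ} (hn : n ≤ N) {g : ℝ → ℝ} (hgm : Measurable g)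
    (hg : 0 ≤ g) :
    ∫⁻ ω, ENNReal.ofReal (∏ i ∈ range n, g (X i ω)) ∂P ≤
      ENNReal.ofReal (((∑ j, g (x j)) / N) ^ n) := by
  set S : Finset (Fin N) := univ.map (Fin.castLEEmb hn)
  have hS : ∀ ω, ∏ i ∈ range n, g (X i ω) = ∏ i ∈ S, g (X i ω) := fun ω => by
    simp [S, Fin.prod_univ_eq_prod_range (fun i => g (X i ω))]
  simp_rw [hS]
  rw [hX.lintegral_comp hXm (f := fun y => ENNReal.ofReal (∏ i ∈ S, g (y i))) (by fun_prop),
    ← ENNReal.ofReal_sum_of_nonneg fun e _ => prod_nonneg fun i _ => hg _,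
    ← ENNReal.ofReal_natCast, ← ENNReal.ofReal_inv_of_pos (by positivity),
    ← ENNReal.ofReal_mul (by positivity), inv_mul_eq_div]
  gcongr
  simpa [S] using sum_perm_prod_div_le (fun j => hg (x j)) S

theorem samplesWithoutReplacement.measure_le_sub_le_exp (hX : samplesWithoutReplacement P N x X)
    (hXm : ∀ i, Measurable (X i)) {n : ℕ} (hn : n ≤ N) {z : ℝ → ℝ} (hzm : Measurable z) {c : ℝ}
    (hz : ∀ j, z (x j) ∈ Set.Icc 0 c) {l : ℝ} (hl : 0 ≤ l) (t : ℝ) :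
    P {ω | t ≤ (∑ j, z (x j)) / N - (∑ i ∈ range n, z (X i ω)) / n} ≤
      ENNReal.ofReal (exp (n * (l ^ 2 * c * ((∑ j, z (x j)) / N) / 2 - l * t))) := by
  set m := (∑ j, z (x j)) / N
  have hmean : (∑ j, exp (-(l * z (x j)))) / N ≤ exp ((l ^ 2 * c / 2 - l) * m) := by
    simpa using sum_exp_neg_mul_div_le hz hl
  calc P {ω | t ≤ m - (∑ i ∈ range n, z (X i ω)) / n}
      ≤ ∫⁻ ω, ENNReal.ofReal
          (exp (l * n * (m - t)) * ∏ i ∈ range n, exp (-(l * z (X i ω)))) ∂P := by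
        refine meas_le_lintegral₀ (by fun_prop) fun ω hω => ?_
        have hω : t ≤ m - (∑ i ∈ range n, z (X i ω)) / n := hω
        have hsum : ∑ i ∈ range n, z (X i ω) ≤ n * (m - t) := by
          have := mul_le_mul_of_nonneg_left hω n.cast_nonneg
          rw [mul_sub, mul_div_cancel_of_imp' (by simp +contextual)] at this
          linarith
        rw [← exp_sum, ← exp_add, ENNReal.one_le_ofReal, one_le_exp_iff, sum_neg_distrib, ← mul_sum]
        nlinarith
    _ = ENNReal.ofReal (exp (l * n * (m - t))) *
          ∫⁻ ω, ENNReal.ofReal (∏ i ∈ range n, exp (-(l * z (X i ω)))) ∂P := by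
        simp_rw [ENNReal.ofReal_mul (exp_pos _).le]
        exact lintegral_const_mul' _ _ ENNReal.ofReal_ne_top
    _ ≤ ENNReal.ofReal (exp (l * n * (m - t))) *
          ENNReal.ofReal (exp ((l ^ 2 * c / 2 - l) * m) ^ n) := by
        gcongr
        refine (hX.lintegral_prod_le hXm hn (g := fun y => exp (-(l * z y))) (by fun_prop)
          fun y => (exp_pos _).le).trans ?_
        gcongr
    _ = ENNReal.ofReal (exp (n * (l ^ 2 * c * m / 2 - l * t))) := by
        rw [← ENNReal.ofReal_mul (exp_pos _).le, ← exp_nat_mul, ← exp_add]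
        ring_nf

theorem samplesWithoutReplacement.measure_le_sub_le_exp_neg_sq
    (hX : samplesWithoutReplacement P N x X) (hXm : ∀ i, Measurable (X i)) {n : ℕ} (hn : n ≤ N)
    {z : ℝ → ℝ} (hzm : Measurable z) {c : ℝ} (hz : ∀ j, z (x j) ∈ Set.Icc 0 c) {t : ℝ}
    (ht : 0 ≤ t) :
    P {ω | t ≤ (∑ j, z (x j)) / N - (∑ i ∈ range n, z (X i ω)) / n} ≤
      ENNReal.ofReal (exp (-(n * t ^ 2) / (2 * c * ((∑ j, z (x j)) / N)))) := by
  set m := (∑ j, z (x j)) / N with hm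
  have hcm : 0 ≤ c * m := by
    rw [mul_div_assoc', mul_sum]
    exact div_nonneg (sum_nonneg fun j _ => mul_nonneg ((hz j).1.trans (hz j).2) (hz j).1)
      N.cast_nonneg
  rcases hcm.eq_or_lt with hcm0 | hcm0
  -- both bounds are `1`, the right one through `x / 0 = 0`
  · simpa [mul_assoc, ← hcm0] using hX.measure_le_sub_le_exp hXm hn hzm hz le_rfl t
  -- the exponent `n (l² c m / 2 - l t)` is minimal at `l = t / (c m)`
  · convert hX.measure_le_sub_le_exp hXm hn hzm hz (div_nonneg ht hcm0.le) t using 3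
    rw [← hm]
    field_simp
    ring

end Sampling

theorem ofReal_one_sub_le_measure_of_tail_le {Ω : Type*} [MeasurableSpace Ω] {P : Measure Ω}
    [IsProbabilityMeasure P] {V : Ω → ℝ} {s w : ℝ} {n : ℕ} (hn : n ≠ 0) (hw : 0 < w) (hs : 0 < s)
    (htail : ∀ t, 0 ≤ t →
      P {ω | t ≤ s - V ω} ≤ ENNReal.ofReal (exp (-(n * t ^ 2) / (2 * w ^ 2 * s))))
    {δ : ℝ} (hδ : 0 < δ) (hδ1 : δ ≤ 1) :
    ENNReal.ofReal (1 - δ) ≤ P {ω | s - 2 * √s * w * √(log (1 / δ) / (2 * n)) ≤ V ω} := by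
  set T := 2 * √s * w * √(log (1 / δ) / (2 * n))
  have hL : 0 ≤ log (1 / δ) := log_nonneg (one_le_one_div hδ hδ1)
  have hT : T ^ 2 = 4 * s * w ^ 2 * (log (1 / δ) / (2 * n)) := by
    simp only [T, mul_pow, sq_sqrt hs.le, sq_sqrt (by positivity : 0 ≤ log (1 / δ) / (2 * n))]
    ring
  have hexp : -(n * T ^ 2) / (2 * w ^ 2 * s) = log δ := by
    rw [hT, one_div, log_inv]
    field_simp
    ring
  have hbad : P {ω | s - T ≤ V ω}ᶜ ≤ ENNReal.ofReal δ :=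
    calc P {ω | s - T ≤ V ω}ᶜ ≤ P {ω | T ≤ s - V ω} :=
          measure_mono fun ω (hω : ¬s - T ≤ V ω) => show T ≤ s - V ω by linarith
      _ ≤ ENNReal.ofReal δ := (htail T (by positivity)).trans_eq (by rw [hexp, exp_log hδ])
  rw [ENNReal.ofReal_sub _ hδ.le, ENNReal.ofReal_one, tsub_le_iff_right, ← measure_univ (μ := P)]
  exact (measure_univ_le_add_compl _).trans (by gcongr)

theorem empirical_second_moment_lower_deviation_general
    {Ω : Type*} [MeasurableSpace Ω] (P : Measure Ω) [IsProbabilityMeasure P]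
    (N n : ℕ) (hn1 : 1 ≤ n) (hn : n ≤ N) (x : Fin N → ℝ)
    (X : ℕ → Ω → ℝ) (hXm : ∀ i, Measurable (X i))
    (hX : samplesWithoutReplacement P N x X)
    (a b : ℝ) (ha : IsLeast (Set.range x) a) (hb : IsGreatest (Set.range x) b)
    (μ : ℝ) (hμ : μ = (∑ i, x i) / N)
    (σ2 : ℝ) (hσ2 : σ2 = (∑ i, (x i - μ) ^ 2) / N)
    (V : Ω → ℝ) (hV : ∀ ω, V ω = (∑ i ∈ Finset.range n, (X i ω - μ) ^ 2) / (n : ℝ)) :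
    (∀ ε : ℝ, 0 < ε →
      P {ω | σ2 - V ω ≥ (b - a) ^ 2 / (n : ℝ) * ε} ≤
        ENNReal.ofReal (Real.exp (-((b - a) ^ 2 * ε ^ 2) / (2 * n * σ2)))) ∧
    (∀ δ : ℝ, 0 < δ → δ ≤ 1 →
      ENNReal.ofReal (1 - δ) ≤
        P {ω | σ2 - 2 * Real.sqrt σ2 * (b - a) *
            Real.sqrt (Real.log (1 / δ) / (2 * n)) ≤ V ω}) := by
  have hx : ∀ j, x j ∈ Set.Icc a b := fun j => ⟨ha.2 ⟨j, rfl⟩, hb.2 ⟨j, rfl⟩⟩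
  have : Nonempty (Fin N) := Set.range_nonempty_iff_nonempty.1 ⟨a, ha.1⟩
  have hμab : μ ∈ Set.Icc a b := by simpa [hμ] using sum_div_card_mem_Icc hx
  have hz : ∀ j, (x j - μ) ^ 2 ∈ Set.Icc 0 ((b - a) ^ 2) := fun j =>
    ⟨sq_nonneg _, sq_le_sq' (by linarith [(hx j).1, hμab.2]) (by linarith [(hx j).2, hμab.1])⟩
  have hσ2ab : σ2 ≤ (b - a) ^ 2 := by simpa [hσ2] using (sum_div_card_mem_Icc hz).2
  have tail : ∀ t, 0 ≤ t → P {ω | t ≤ σ2 - V ω} ≤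
      ENNReal.ofReal (exp (-(n * t ^ 2) / (2 * (b - a) ^ 2 * σ2))) := fun t ht => by
    simpa only [hσ2, hV] using
      hX.measure_le_sub_le_exp_neg_sq hXm hn (z := fun y => (y - μ) ^ 2) (by fun_prop) hz ht
  refine ⟨fun ε hε => (tail _ (by positivity)).trans_eq ?_, fun δ hδ hδ1 => ?_⟩
  · rcases eq_or_ne (b - a) 0 with hba | hba
    · simp [hba]
    have : (n : ℝ) ≠ 0 := by positivity
    field_simp
  · rcases (show 0 ≤ σ2 from hσ2 ▸ by positivity).eq_or_lt with hσ0 | hσ0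
    · refine (ENNReal.ofReal_le_one.2 (by linarith)).trans ?_
      refine (measure_univ (μ := P)).symm.le.trans (measure_mono fun ω _ => ?_)
      show _ ≤ V ω
      rw [← hσ0, hV]
      simp only [sqrt_zero, mul_zero, zero_mul, sub_zero]
      positivity
    · have hab : a ≤ b := hμab.1.trans hμab.2
      refine ofReal_one_sub_le_measure_of_tail_le (by omega) ?_ hσ0 tail hδ hδ1
      nlinarith

/-- Lower-deviation bound for the empirical second moment
`V_n = (1/n) ∑_{i=1}^n (X_i - μ)²` under sampling without replacement. -/
theorem empirical_second_moment_lower_deviation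
    {Ω : Type*} [MeasurableSpace Ω] (P : Measure Ω) [IsProbabilityMeasure P]
    (N n : ℕ) (hN : 2 ≤ N) (hn1 : 1 ≤ n) (hn : n ≤ N) (x : Fin N → ℝ)
    (X : ℕ → Ω → ℝ) (hXm : ∀ i, Measurable (X i))
    (hX : samplesWithoutReplacement P N x X)
    (a b : ℝ) (ha : IsLeast (Set.range x) a) (hb : IsGreatest (Set.range x) b)
    (μ : ℝ) (hμ : μ = (∑ i, x i) / N)
    (σ2 : ℝ) (hσ2 : σ2 = (∑ i, (x i - μ) ^ 2) / N)
    (V : Ω → ℝ) (hV : ∀ ω, V ω = (∑ i ∈ Finset.range n, (X i ω - μ) ^ 2) / (n : ℝ)) :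
    (∀ ε : ℝ, 0 < ε →
      P {ω | σ2 - V ω ≥ (b - a) ^ 2 / (n : ℝ) * ε} ≤
        ENNReal.ofReal (Real.exp (-((b - a) ^ 2 * ε ^ 2) / (2 * n * σ2)))) ∧
    (∀ δ : ℝ, 0 < δ → δ ≤ 1 →
      ENNReal.ofReal (1 - δ) ≤
        P {ω | σ2 - 2 * Real.sqrt σ2 * (b - a) *
            Real.sqrt (Real.log (1 / δ) / (2 * n)) ≤ V ω}) :=
  empirical_second_moment_lower_deviation_general P N n hn1 hn x X hXm hX a b ha hb μ hμ σ2 hσ2 V hV
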